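/- The quaternionic Hopf map h : S⁷ → ℙ(ℍ²) is a locally trivial fiber bundle with fiber the 3-sphere of unit quaternions: every point of ℙ(ℍ²) has an open neighborhood U together with a homeomorphism h⁻¹(U) ≃ U × {q ∈ ℍ : ‖q‖ = 1} commuting with the projections to U. -/

import Mathlib

/-!
STATEMENT 4: The quaternionic Hopf map `h : S⁷ → ℙ(ℍ²)` is a locally trivial fiber
bundle with fiber the 3-sphere of unit quaternions: every point of `ℙ(ℍ²)` has an
open neighborhood `U` together with a homeomorphism `h⁻¹(U) ≃ U × {q ∈ ℍ : ‖q‖ = 1}`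
commuting with the projections to `U`.
-/

open scoped LinearAlgebra.Projectivization

noncomputable section

local notation "ℍ" => Quaternion ℝ

/-- `ℍ²`: the product `ℍ × ℍ` with the L² (Euclidean) norm, a left `ℍ`-module. -/
abbrev H2 : Type := WithLp 2 (ℍ × ℍ)

/-- The quotient topology on the projectivization `ℙ ℍ ℍ²`. -/
instance : TopologicalSpace (ℙ ℍ H2) :=
  inferInstanceAs (TopologicalSpace (Quotient (projectivizationSetoid ℍ H2)))

/-- `S⁷`: the unit sphere of `ℍ²`, with the subspace topology. -/
abbrev S7 : Type := Metric.sphere (0 : H2) 1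

/-- The quaternionic Hopf map, sending a unit vector `v ∈ S⁷ ⊆ ℍ²` to its
equivalence class `[v] ∈ ℙ(ℍ²)`, i.e. to the quaternionic line it spans. -/
def hopf (v : S7) : ℙ ℍ H2 :=
  Projectivization.mk ℍ (v : H2) (by
    have hv : ‖(v : H2)‖ = 1 := mem_sphere_zero_iff_norm.mp v.2
    intro h
    rw [h] at hv
    simp at hv)

/-!
Let `f : ℍ² → ℍ` be a continuous left `ℍ`-linear functional. Every line `ℓ` on which `f` does
not vanish has a unique representative `w` with `f w = 1`, and `w` depends continuously on `ℓ`
because `ℍ² ∖ {0} → ℙ(ℍ²)` is an open quotient map (the unit group acts by homeomorphisms).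
A unit vector `v` over such a line is then determined by the phase `f v / ‖f v‖ ∈ S³`, which
trivializes the Hopf map over the open set `{f ≠ 0}`; the two coordinate functionals give two
such sets covering `ℙ(ℍ²)`.
-/

namespace Projectivization

section Algebra

variable {K V : Type*} [DivisionRing K] [AddCommGroup V] [Module K V] (f : V →ₗ[K] K)

/-- The representative `w` of a line with `f w = 1`; it is `0` where `f` vanishes on the line,
because `(0 : K)⁻¹ = 0`. -/
def affineRep : ℙ K V → V :=
  Projectivization.lift (fun w => (f w)⁻¹ • (w : V)) fun a b t hab => by
    have ht : t ≠ 0 := by rintro rfl; exact a.2 (by simpa using hab)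
    rw [hab, map_smul, smul_eq_mul, mul_inv_rev, mul_smul, inv_smul_smul₀ ht]

def nonvanishingLocus : Set (ℙ K V) := {ℓ | affineRep f ℓ ≠ 0}

@[simp]
theorem affineRep_mk (v : V) (hv : v ≠ 0) : affineRep f (mk K v hv) = (f v)⁻¹ • v := rfl

theorem mk_mem_nonvanishingLocus {v : V} (hv : v ≠ 0) :
    mk K v hv ∈ nonvanishingLocus f ↔ f v ≠ 0 := by
  simp [nonvanishingLocus, hv]

theorem apply_affineRep {ℓ : ℙ K V} (hℓ : ℓ ∈ nonvanishingLocus f) : f (affineRep f ℓ) = 1 := by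
  induction ℓ with | h v hv =>
  rw [mk_mem_nonvanishingLocus] at hℓ
  simp [hℓ]

theorem mk_affineRep {ℓ : ℙ K V} (hℓ : ℓ ∈ nonvanishingLocus f) :
    mk K (affineRep f ℓ) hℓ = ℓ := by
  induction ℓ with | h v hv =>
  exact (mk_eq_mk_iff' K _ _ _ hv).mpr ⟨(f v)⁻¹, rfl⟩

end Algebra

theorem isOpenQuotientMap_quotientMk {K V : Type*} [DivisionRing K] [AddCommGroup V]
    [Module K V] [TopologicalSpace V] [ContinuousConstSMul K V] :
    IsOpenQuotientMap (Quotient.mk (projectivizationSetoid K V)) := by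
  refine ⟨Quotient.mk_surjective, continuous_quotient_mk', fun s hs => ?_⟩
  obtain ⟨t, ht, rfl⟩ := isOpen_induced_iff.mp hs
  have hsat :
      Quotient.mk (projectivizationSetoid K V) ⁻¹' (Quotient.mk _ '' (Subtype.val ⁻¹' t)) =
        ((↑) : {v : V // v ≠ 0} → V) ⁻¹' ⋃ a : Kˣ, (a • ·) ⁻¹' t := by
    ext w
    simp only [Set.mem_preimage, Set.mem_image, Quotient.eq, Set.mem_iUnion]
    constructor
    · rintro ⟨x, hx, a, ha⟩
      exact ⟨a, Set.mem_of_eq_of_mem ha hx⟩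
    · rintro ⟨a, ha⟩
      exact ⟨⟨a • w, (smul_ne_zero_iff_ne a).mpr w.2⟩, ha, a, rfl⟩
  rw [← isQuotientMap_quotient_mk'.isOpen_preimage]
  change IsOpen (Quotient.mk (projectivizationSetoid K V) ⁻¹' _)
  rw [hsat]
  exact (isOpen_iUnion fun a => ht.preimage (continuous_const_smul a)).preimage
    continuous_subtype_val

end Projectivization

open Projectivization

namespace Hopf

theorem isOpenQuotientMap_mk' :
    IsOpenQuotientMap (mk' ℍ : {v : H2 // v ≠ 0} → ℙ ℍ H2) :=
  isOpenQuotientMap_quotientMk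

theorem continuous_hopf : Continuous hopf :=
  isOpenQuotientMap_mk'.continuous.comp (continuous_subtype_val.subtype_mk _)

theorem exists_mem_nonvanishingLocus (ℓ : ℙ ℍ H2) :
    ∃ f : H2 →L[ℍ] ℍ, ℓ ∈ nonvanishingLocus (f : H2 →ₗ[ℍ] ℍ) := by
  induction ℓ with | h v hv =>
  by_cases h : v.fst = 0
  · refine ⟨WithLp.sndL 2 ℍ ℍ ℍ, (mk_mem_nonvanishingLocus _ hv).mpr fun h' => hv ?_⟩
    exact (WithLp.ext_iff 2).mpr (Prod.ext h h')
  · exact ⟨WithLp.fstL 2 ℍ ℍ ℍ, (mk_mem_nonvanishingLocus _ hv).mpr h⟩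

variable (f : H2 →ₗ[ℍ] ℍ)

theorem hopf_mem_nonvanishingLocus {v : S7} : hopf v ∈ nonvanishingLocus f ↔ f v ≠ 0 :=
  mk_mem_nonvanishingLocus f _

theorem isOpen_nonvanishingLocus (hf : Continuous f) : IsOpen (nonvanishingLocus f) := by
  rw [← isOpenQuotientMap_mk'.isQuotientMap.isOpen_preimage]
  have : mk' ℍ ⁻¹' nonvanishingLocus f = {w : {v : H2 // v ≠ 0} | f w ≠ 0} :=
    Set.ext fun w => mk_mem_nonvanishingLocus f w.2
  rw [this]
  exact isOpen_ne_fun (hf.comp continuous_subtype_val) continuous_const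

theorem continuousOn_affineRep (hf : Continuous f) :
    ContinuousOn (affineRep f) (nonvanishingLocus f) := by
  rw [continuousOn_iff_continuous_domRestrict,
    ((isOpenQuotientMap_mk'.restrictPreimage _).isQuotientMap).continuous_iff]
  have hfw : Continuous fun w : mk' ℍ ⁻¹' nonvanishingLocus f => f w.1 :=
    hf.comp (continuous_subtype_val.comp continuous_subtype_val)
  exact (hfw.inv₀ fun w => (mk_mem_nonvanishingLocus f w.1.2).mp w.2).smul
    (continuous_subtype_val.comp continuous_subtype_val)

/-- The point of the fibre over `ℓ` with phase `q`: the unit vector on `ℓ` at which `f` is a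
positive real multiple of `q`. -/
def fiberPoint (ℓ : ℙ ℍ H2) (q : ℍ) : H2 :=
  (‖affineRep f ℓ‖⁻¹ • q) • affineRep f ℓ

variable {f} {ℓ : ℙ ℍ H2} {q : ℍ}

theorem norm_fiberPoint (hℓ : ℓ ∈ nonvanishingLocus f) (hq : ‖q‖ = 1) :
    ‖fiberPoint f ℓ q‖ = 1 := by
  have : ‖affineRep f ℓ‖ ≠ 0 := norm_ne_zero_iff.mpr hℓ
  simp [fiberPoint, norm_smul, hq, this]

theorem hopf_fiberPoint (hℓ : ℓ ∈ nonvanishingLocus f) (hq : ‖q‖ = 1) :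
    hopf ⟨fiberPoint f ℓ q, mem_sphere_zero_iff_norm.mpr (norm_fiberPoint hℓ hq)⟩ = ℓ := by
  conv_rhs => rw [← mk_affineRep f hℓ]
  exact (mk_eq_mk_iff' ℍ _ _ _ _).mpr ⟨_, rfl⟩

theorem inv_norm_smul_apply_fiberPoint (hℓ : ℓ ∈ nonvanishingLocus f) (hq : ‖q‖ = 1) :
    ‖f (fiberPoint f ℓ q)‖⁻¹ • f (fiberPoint f ℓ q) = q := by
  have : ‖affineRep f ℓ‖ ≠ 0 := norm_ne_zero_iff.mpr hℓ
  simp [fiberPoint, apply_affineRep f hℓ, norm_smul, hq, smul_smul, this]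

theorem fiberPoint_hopf (v : S7) (hv : f v ≠ 0) :
    fiberPoint f (hopf v) (‖f v‖⁻¹ • f v) = v := by
  have hv1 : ‖(v : H2)‖ = 1 := mem_sphere_zero_iff_norm.mp v.2
  have : ‖f v‖ ≠ 0 := norm_ne_zero_iff.mpr hv
  simp [fiberPoint, hopf, norm_smul, hv1, smul_smul, this, hv]

variable (f) in
def trivialization (hf : Continuous f) :
    (hopf ⁻¹' nonvanishingLocus f : Set S7) ≃ₜ nonvanishingLocus f × Metric.sphere (0 : ℍ) 1 where
  toFun v := (⟨hopf v, v.2⟩, ⟨‖f v‖⁻¹ • f v, by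
    simpa using norm_smul_inv_norm (𝕜 := ℝ) ((hopf_mem_nonvanishingLocus f).mp v.2)⟩)
  invFun p := ⟨⟨fiberPoint f p.1 p.2, mem_sphere_zero_iff_norm.mpr
      (norm_fiberPoint p.1.2 (mem_sphere_zero_iff_norm.mp p.2.2))⟩, by
    rw [Set.mem_preimage, hopf_fiberPoint p.1.2 (mem_sphere_zero_iff_norm.mp p.2.2)]
    exact p.1.2⟩
  left_inv v := Subtype.ext <| Subtype.ext <|
    fiberPoint_hopf v.1 ((hopf_mem_nonvanishingLocus f).mp v.2)
  right_inv p := Prod.ext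
    (Subtype.ext (hopf_fiberPoint p.1.2 (mem_sphere_zero_iff_norm.mp p.2.2)))
    (Subtype.ext (inv_norm_smul_apply_fiberPoint p.1.2 (mem_sphere_zero_iff_norm.mp p.2.2)))
  continuous_toFun := by
    have hfv : Continuous fun v : (hopf ⁻¹' nonvanishingLocus f : Set S7) => f v :=
      hf.comp (continuous_subtype_val.comp continuous_subtype_val)
    refine .prodMk ((continuous_hopf.comp continuous_subtype_val).subtype_mk _) ?_
    exact ((hfv.norm.inv₀ fun v => norm_ne_zero_iff.mpr
      ((hopf_mem_nonvanishingLocus f).mp v.2)).smul hfv).subtype_mk _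
  continuous_invFun := by
    have hw : Continuous fun p : nonvanishingLocus f × Metric.sphere (0 : ℍ) 1 =>
        affineRep f p.1 :=
      (continuousOn_affineRep f hf).domRestrict.comp continuous_fst
    refine .subtype_mk (.subtype_mk ?_ _) _
    exact ((hw.norm.inv₀ fun p => norm_ne_zero_iff.mpr p.1.2).smul
      (continuous_subtype_val.comp continuous_snd)).smul hw

end Hopf

theorem hopf_locally_trivial (ℓ : ℙ ℍ H2) :
    ∃ U : Set (ℙ ℍ H2), IsOpen U ∧ ℓ ∈ U ∧
      ∃ e : (hopf ⁻¹' U : Set S7) ≃ₜ U × Metric.sphere (0 : ℍ) 1,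
        ∀ v : (hopf ⁻¹' U : Set S7), ((e v).1 : ℙ ℍ H2) = hopf (v : S7) := by
  obtain ⟨f, hℓ⟩ := Hopf.exists_mem_nonvanishingLocus ℓ
  exact ⟨_, Hopf.isOpen_nonvanishingLocus _ f.continuous, hℓ,
    Hopf.trivialization _ f.continuous, fun _ => rfl⟩
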